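/- arXiv:2107.06121 — 3 statements merged into one kernel-verified Lean document; each statement's English description precedes it below -/
import Mathlib

section
/- (Lemma 3.1(b)) If a hypergraph H is acyclic, then every maximum-weight spanning forest of the weighted hyperedge graph wg(H) is a join forest of H. -/
/-!
Lemma 3.1(a) (Bernstein–Goodman): a hypergraph `H` is acyclic iff the weight `w(H)`
equals the weight of a maximum-weight spanning forest of the weighted hyperedge
graph `wg(H)`.

A hypergraph on a finite vertex type `V` is given by its finite set `E` of
hyperedges, each a `Finset V`.
-/

variable {V : Type*} [Fintype V] [DecidableEq V]

/-- The degree of a vertex `v`: the number of hyperedges containing `v`. -/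
def hdeg (E : Finset (Finset V)) (v : V) : ℕ := (E.filter (fun e => v ∈ e)).card

/-- The weight of a hypergraph: the sum, over non-isolated vertices, of (degree − 1). -/
def hweight (E : Finset (Finset V)) : ℕ :=
  ∑ v ∈ Finset.univ.filter (fun v => 1 ≤ hdeg E v), (hdeg E v - 1)

/-- The weighted hyperedge graph `wg(H)`: nodes are the hyperedges, two distinct
hyperedges are adjacent iff they intersect.  (The weight of an edge `(e, f)` is
`(e ∩ f).card`, see `fweight`.) -/
def wg (E : Finset (Finset V)) : SimpleGraph (Finset V) where
  Adj e f := e ∈ E ∧ f ∈ E ∧ e ≠ f ∧ (e ∩ f).Nonempty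
  symm := ⟨fun e f ⟨he, hf, hne, hi⟩ => ⟨hf, he, hne.symm, by rwa [Finset.inter_comm] at hi⟩⟩
  loopless := ⟨fun e h => h.2.2.1 rfl⟩

/-- The weight `|e ∩ f|` of an (unordered) pair of hyperedges. -/
def interWt : Sym2 (Finset V) → ℕ :=
  Sym2.lift ⟨fun a b => (a ∩ b).card, fun a b => by simp [Finset.inter_comm]⟩

/-- The weight of a forest (or any graph) on hyperedges: the sum over its edges
of the size of the intersection of the two endpoints. -/
noncomputable def fweight (F : SimpleGraph (Finset V)) : ℕ :=
  ∑ p ∈ (Set.toFinite F.edgeSet).toFinset, interWt p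

/-- `S` is a spanning forest of `G`: an acyclic subgraph with the same connected
components (in particular it contains all nodes of `G`). -/
def IsSpanningForest (G S : SimpleGraph (Finset V)) : Prop :=
  S ≤ G ∧ S.IsAcyclic ∧ ∀ a b, S.Reachable a b ↔ G.Reachable a b

/-- `S` is a maximum-weight spanning forest of `G`. -/
def IsMaxSpanningForest (G S : SimpleGraph (Finset V)) : Prop :=
  IsSpanningForest G S ∧ ∀ S', IsSpanningForest G S' → fweight S' ≤ fweight S

/-- A forest whose node set is the set of hyperedges of the hypergraph `E`. -/
def IsForestOn (E : Finset (Finset V)) (F : SimpleGraph (Finset V)) : Prop :=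
  F.IsAcyclic ∧ ∀ e f, F.Adj e f → e ∈ E ∧ f ∈ E

/-- A join forest of the hypergraph `E`: a forest on the hyperedges such that any
two hyperedges sharing a vertex `v` are connected, and every node on the (unique)
path between them contains `v`. -/
def IsJoinForest (E : Finset (Finset V)) (J : SimpleGraph (Finset V)) : Prop :=
  IsForestOn E J ∧
  ∀ e ∈ E, ∀ f ∈ E, ∀ v ∈ e, v ∈ f →
    J.Reachable e f ∧ ∀ p : J.Walk e f, p.IsPath → ∀ g ∈ p.support, v ∈ g

/-- A hypergraph is acyclic iff it has a join forest. -/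
def IsAcyclicHypergraph (E : Finset (Finset V)) : Prop := ∃ J, IsJoinForest E J

/-!
The weight of a forest `F` on the hyperedges counts each edge `{e, f}` once for every vertex
`v ∈ e ∩ f`, so `fweight F = ∑ v, |F_v|`, where `F_v = F.throughVertex v` keeps the edges
between hyperedges containing `v`. Each `F_v` is a forest on the `hdeg E v` hyperedges
containing `v`, hence has at most `hdeg E v - 1` edges, with equality iff it connects all of
them; equality for every `v` is exactly the join-forest property. So `fweight F ≤ hweight E`,
with equality iff `F` is a join forest. A join forest, with its edges between disjoint
hyperedges removed, is a spanning forest of `wg E` of weight `hweight E`; a maximum-weight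
spanning forest therefore attains the bound and is a join forest.
-/

namespace SimpleGraph

variable {α : Type*} {G : SimpleGraph α} {s : Set α}

theorem Walk.support_subset_of_support_subset (hG : G.support ⊆ s) {u v : α} (p : G.Walk u v)
    (hu : u ∈ s) : ∀ x ∈ p.support, x ∈ s := by
  intro x hx
  by_cases hp : p.Nil
  · rw [nil_iff_support_eq.1 hp, List.mem_singleton] at hx
    exact hx ▸ hu
  · exact hG (mem_support_of_mem_walk_support p hp hx)

theorem Reachable.induce_of_support_subset (hG : G.support ⊆ s) {u v : α} (hu : u ∈ s)
    (hv : v ∈ s) (h : G.Reachable u v) : (G.induce s).Reachable ⟨u, hu⟩ ⟨v, hv⟩ :=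
  let p := h.some
  ⟨p.induce s (p.support_subset_of_support_subset hG hu)⟩

theorem ncard_edgeSet_induce_of_support_subset (hG : G.support ⊆ s) :
    (G.induce s).edgeSet.ncard = G.edgeSet.ncard := by
  conv_rhs => rw [← (G.spanningCoe_induce_eq_self s).2 hG]
  rw [spanningCoe, edgeSet_map,
    Set.ncard_image_of_injective _ (Function.Embedding.subtype _).sym2Map.injective]

theorem Reachable.of_forall_adj_reachable {H : SimpleGraph α}
    (h : ∀ ⦃u v⦄, G.Adj u v → H.Reachable u v) {u v : α} (huv : G.Reachable u v) :
    H.Reachable u v := by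
  rw [reachable_iff_reflTransGen] at huv ⊢
  exact huv.lift' id fun _ _ hab => (reachable_iff_reflTransGen _ _).1 (h hab)

section Finite

variable [Finite α]

theorem IsTree.ncard_edgeSet (hG : G.IsTree) : G.edgeSet.ncard = Nat.card α - 1 := by
  have hcard := (isTree_iff_connected_and_card.1 hG).2
  rw [Nat.card_coe_set_eq] at hcard
  omega

theorem IsAcyclic.ncard_edgeSet_le (hG : G.IsAcyclic) : G.edgeSet.ncard ≤ Nat.card α - 1 := by
  cases isEmpty_or_nonempty α
  · simp [Set.eq_empty_of_isEmpty G.edgeSet]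
  obtain ⟨T, hGT, -, hT⟩ := connected_top.exists_isTree_le_of_le_of_isAcyclic le_top hG
  rw [← hT.ncard_edgeSet]
  exact Set.ncard_le_ncard (edgeSet_mono hGT)

theorem IsAcyclic.preconnected_iff_ncard_edgeSet (hG : G.IsAcyclic) :
    G.Preconnected ↔ G.edgeSet.ncard = Nat.card α - 1 := by
  cases isEmpty_or_nonempty α
  · simp [Set.eq_empty_of_isEmpty G.edgeSet, Preconnected]
  refine ⟨fun h => IsTree.ncard_edgeSet ⟨⟨h⟩, hG⟩, fun h => ?_⟩
  obtain ⟨T, hGT, -, hT⟩ := connected_top.exists_isTree_le_of_le_of_isAcyclic le_top hG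
  have hGT : G = T := edgeSet_inj.1 <|
    Set.eq_of_subset_of_ncard_le (edgeSet_mono hGT) (by rw [hT.ncard_edgeSet, h])
  exact hGT ▸ hT.connected.preconnected

end Finite

theorem IsAcyclic.ncard_edgeSet_le_of_support_subset (hG : G.IsAcyclic) (hs : s.Finite)
    (hGs : G.support ⊆ s) : G.edgeSet.ncard ≤ s.ncard - 1 := by
  have := hs.to_subtype
  rw [← ncard_edgeSet_induce_of_support_subset hGs, ← Nat.card_coe_set_eq s]
  exact (hG.induce s).ncard_edgeSet_le

theorem IsAcyclic.ncard_edgeSet_eq_iff_of_support_subset (hG : G.IsAcyclic) (hs : s.Finite)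
    (hGs : G.support ⊆ s) :
    G.edgeSet.ncard = s.ncard - 1 ↔ ∀ a ∈ s, ∀ b ∈ s, G.Reachable a b := by
  have := hs.to_subtype
  rw [← ncard_edgeSet_induce_of_support_subset hGs, ← Nat.card_coe_set_eq s,
    ← (hG.induce s).preconnected_iff_ncard_edgeSet]
  refine ⟨fun h a ha b hb => (h ⟨a, ha⟩ ⟨b, hb⟩).map (Embedding.induce s).toHom,
    fun h a b => (h a a.2 b b.2).induce_of_support_subset hGs a.2 b.2⟩

variable {β : Type*}

def throughVertex (F : SimpleGraph (Finset β)) (v : β) : SimpleGraph (Finset β) where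
  Adj x y := F.Adj x y ∧ v ∈ x ∧ v ∈ y
  symm := ⟨fun _ _ ⟨h, hx, hy⟩ => ⟨h.symm, hy, hx⟩⟩
  loopless := ⟨fun _ h => F.irrefl h.1⟩

variable {F : SimpleGraph (Finset β)} {v : β}

theorem throughVertex_le : F.throughVertex v ≤ F := fun _ _ h => h.1

theorem support_throughVertex_subset : (F.throughVertex v).support ⊆ {x | v ∈ x} :=
  fun _ ⟨_, h⟩ => h.2.1

theorem Walk.reachable_throughVertex {e f : Finset β} (p : F.Walk e f)
    (hp : ∀ x ∈ p.support, v ∈ x) : (F.throughVertex v).Reachable e f :=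
  ⟨p.transfer _ fun a ha => by
    induction a with
    | _ x y => exact ⟨p.adj_of_mem_edges ha, hp x (p.fst_mem_support_of_mem_edges ha),
        hp y (p.snd_mem_support_of_mem_edges ha)⟩⟩

theorem IsAcyclic.mem_of_mem_support_of_reachable_throughVertex (hF : F.IsAcyclic)
    {e f : Finset β} (hv : v ∈ e) (h : (F.throughVertex v).Reachable e f) {p : F.Walk e f}
    (hp : p.IsPath) : ∀ x ∈ p.support, v ∈ x := by
  classical
  obtain ⟨q, hq⟩ := h.some.toPath
  have hpq : p = q.mapLe throughVertex_le :=
    congrArg Subtype.val ((hF.subsingleton_path e f).elim ⟨p, hp⟩ ⟨_, hq.mapLe throughVertex_le⟩)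
  rw [hpq, Walk.support_mapLe_eq_support]
  exact q.support_subset_of_support_subset support_throughVertex_subset hv

end SimpleGraph

open SimpleGraph Finset

section Hypergraph

variable {W : Type*} {E : Finset (Finset W)} {F : SimpleGraph (Finset W)}

theorem IsForestOn.support_throughVertex_subset (hF : IsForestOn E F) (v : W) :
    (F.throughVertex v).support ⊆ {e | e ∈ E ∧ v ∈ e} :=
  fun x ⟨y, h⟩ => ⟨(hF.2 x y h.1).1, h.2.1⟩

theorem IsForestOn.isJoinForest_iff (hF : IsForestOn E F) :
    IsJoinForest E F ↔
      ∀ v, ∀ e ∈ E, ∀ f ∈ E, v ∈ e → v ∈ f → (F.throughVertex v).Reachable e f := by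
  classical
  refine ⟨fun hJ v e he f hf hve hvf => ?_, fun h => ⟨hF, fun e he f hf v hve hvf => ?_⟩⟩
  · obtain ⟨p⟩ := (hJ.2 e he f hf v hve hvf).1
    exact p.toPath.1.reachable_throughVertex
      ((hJ.2 e he f hf v hve hvf).2 _ p.toPath.2)
  · have hreach := h v e he f hf hve hvf
    exact ⟨hreach.mono throughVertex_le,
      fun p hp => hF.1.mem_of_mem_support_of_reachable_throughVertex hve hreach hp⟩

section DecidableEq

variable [DecidableEq W]

theorem IsForestOn.ncard_edgeSet_throughVertex_le (hF : IsForestOn E F) (v : W) :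
    (F.throughVertex v).edgeSet.ncard ≤ hdeg E v - 1 := by
  rw [hdeg, ← Set.ncard_coe_finset, coe_filter]
  exact (hF.1.anti throughVertex_le).ncard_edgeSet_le_of_support_subset
    (E.finite_toSet.subset fun _ h => h.1) (hF.support_throughVertex_subset v)

theorem IsForestOn.ncard_edgeSet_throughVertex_eq_iff (hF : IsForestOn E F) (v : W) :
    (F.throughVertex v).edgeSet.ncard = hdeg E v - 1 ↔
      ∀ e ∈ E, ∀ f ∈ E, v ∈ e → v ∈ f → (F.throughVertex v).Reachable e f := by
  rw [hdeg, ← Set.ncard_coe_finset, coe_filter,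
    (hF.1.anti throughVertex_le).ncard_edgeSet_eq_iff_of_support_subset
      (E.finite_toSet.subset fun _ h => h.1) (hF.support_throughVertex_subset v)]
  exact ⟨fun h e he f hf hve hvf => h e ⟨he, hve⟩ f ⟨hf, hvf⟩,
    fun h e he f hf => h e he.1 f hf.1 he.2 hf.2⟩

theorem IsSpanningForest.isForestOn_wg {S : SimpleGraph (Finset W)}
    (hS : IsSpanningForest (wg E) S) : IsForestOn E S :=
  ⟨hS.2.1, fun _ _ h => ⟨(hS.1 h).1, (hS.1 h).2.1⟩⟩

theorem IsForestOn.inf_wg (hF : IsForestOn E F) : IsForestOn E (F ⊓ wg E) :=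
  ⟨hF.1.anti inf_le_left, fun x y h => hF.2 x y h.1⟩

theorem IsForestOn.throughVertex_inf_wg (hF : IsForestOn E F) (v : W) :
    (F ⊓ wg E).throughVertex v = F.throughVertex v := by
  ext x y
  exact ⟨fun ⟨h, hx, hy⟩ => ⟨h.1, hx, hy⟩, fun ⟨h, hx, hy⟩ =>
    ⟨⟨h, (hF.2 x y h).1, (hF.2 x y h).2, h.ne, v, mem_inter.2 ⟨hx, hy⟩⟩, hx, hy⟩⟩

theorem IsJoinForest.inf_wg (hJ : IsJoinForest E F) : IsJoinForest E (F ⊓ wg E) := by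
  refine hJ.1.inf_wg.isJoinForest_iff.2 fun v => ?_
  rw [hJ.1.throughVertex_inf_wg]
  exact hJ.1.isJoinForest_iff.1 hJ v

theorem IsJoinForest.isSpanningForest_wg (hJ : IsJoinForest E F) (hle : F ≤ wg E) :
    IsSpanningForest (wg E) F := by
  refine ⟨hle, hJ.1.1, fun _ _ => ⟨fun h => h.mono hle, Reachable.of_forall_adj_reachable ?_⟩⟩
  rintro x y ⟨hx, hy, -, w, hw⟩
  rw [mem_inter] at hw
  exact (hJ.2 x hx y hy w hw.1 hw.2).1

variable [Fintype W]

theorem fweight_eq_sum_ncard_edgeSet_throughVertex (F : SimpleGraph (Finset W)) :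
    fweight F = ∑ v, (F.throughVertex v).edgeSet.ncard := by
  have hinter : ∀ p : Sym2 (Finset W), interWt p = #{v | ∀ x ∈ p, v ∈ x} := by
    rintro ⟨a, b⟩
    change (a ∩ b).card = _
    congr 1
    ext v
    simp
  simp only [fweight, hinter, card_filter]
  rw [sum_comm]
  refine sum_congr rfl fun v _ => ?_
  rw [← card_filter, ← Set.ncard_coe_finset]
  congr 1
  ext ⟨x, y⟩
  simp [throughVertex]

theorem hweight_eq_sum (E : Finset (Finset W)) : hweight E = ∑ v, (hdeg E v - 1) :=
  sum_filter_of_ne fun _ _ h => by omega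

theorem IsForestOn.fweight_le_hweight (hF : IsForestOn E F) : fweight F ≤ hweight E := by
  rw [fweight_eq_sum_ncard_edgeSet_throughVertex, hweight_eq_sum]
  exact sum_le_sum fun v _ => hF.ncard_edgeSet_throughVertex_le v

theorem IsForestOn.fweight_eq_hweight_iff (hF : IsForestOn E F) :
    fweight F = hweight E ↔ IsJoinForest E F := by
  rw [fweight_eq_sum_ncard_edgeSet_throughVertex, hweight_eq_sum,
    sum_eq_sum_iff_of_le fun v _ => hF.ncard_edgeSet_throughVertex_le v, hF.isJoinForest_iff]
  simp only [mem_univ, true_imp_iff, hF.ncard_edgeSet_throughVertex_eq_iff]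

end DecidableEq

end Hypergraph

/-- **Lemma 3.1(b)**: if `H` is acyclic, then every maximum-weight spanning forest
of the weighted hyperedge graph `wg(H)` is a join forest of `H`. -/
theorem maxSpanningForest_isJoinForest_of_acyclic (E : Finset (Finset V))
    (hE : IsAcyclicHypergraph E) :
    ∀ S, IsMaxSpanningForest (wg E) S → IsJoinForest E S := by
  obtain ⟨J, hJ⟩ := hE
  rintro S ⟨hS, hmax⟩
  have hSE := hS.isForestOn_wg
  refine hSE.fweight_eq_hweight_iff.1 (le_antisymm hSE.fweight_le_hweight ?_)
  calc hweight E = fweight (J ⊓ wg E) := (hJ.1.inf_wg.fweight_eq_hweight_iff.2 hJ.inf_wg).symm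
    _ ≤ fweight S := hmax _ (hJ.inf_wg.isSpanningForest_wg inf_le_right)
end

section
/- If J is a join forest of a hypergraph H, then the weight of J equals the weight w(H) of H. -/
/-!
Lemma 3.1(a) (Bernstein–Goodman): a hypergraph `H` is acyclic iff the weight `w(H)`
equals the weight of a maximum-weight spanning forest of the weighted hyperedge
graph `wg(H)`.

A hypergraph on a finite vertex type `V` is given by its finite set `E` of
hyperedges, each a `Finset V`.
-/

variable {V : Type*} [Fintype V] [DecidableEq V]

/-!
Counting `|e ∩ f|` vertex by vertex, the weight of `J` is the sum over `v` of the number of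
edges of `J` whose two ends both contain `v`. By the join property the hyperedges containing `v`
span a subtree of `J`, so this number is `deg v - 1`.
-/

open Finset SimpleGraph

namespace SimpleGraph

variable {W : Type*} {G : SimpleGraph W}

lemma Walk.support_subset_of_start_mem {s : Set W} (hG : G.support ⊆ s) {u v : W}
    (p : G.Walk u v) (hu : u ∈ s) : ∀ x ∈ p.support, x ∈ s := by
  intro x hx
  by_cases hp : p.Nil
  · rw [Walk.nil_iff_support_eq.1 hp, List.mem_singleton] at hx
    exact hx ▸ hu
  · exact hG (mem_support_of_mem_walk_support p hp hx)

end SimpleGraph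

lemma interWt_eq_card_filter (p : Sym2 (Finset V)) :
    interWt p = #{v | ∀ a ∈ p, v ∈ a} := by
  induction p with
  | _ a b =>
    show #(a ∩ b) = _
    congr 1
    ext v
    simp

lemma fweight_eq_sum_card_filter_edgeFinset (F : SimpleGraph (Finset V)) [DecidableRel F.Adj] :
    fweight F = ∑ v, #{p ∈ F.edgeFinset | ∀ a ∈ p, v ∈ a} := by
  have : (Set.toFinite F.edgeSet).toFinset = F.edgeFinset := by ext; simp
  simp only [fweight, this, interWt_eq_card_filter, card_filter]
  exact sum_comm

lemma hweight_eq_sum_hdeg_sub_one (E : Finset (Finset V)) :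
    hweight E = ∑ v, (hdeg E v - 1) :=
  sum_filter_of_ne fun _ _ h => by omega

lemma card_filter_edgeFinset_eq_card_edgeFinset_induce {E : Finset (Finset V)}
    {F : SimpleGraph (Finset V)} [DecidableRel F.Adj] (hE : ∀ e f, F.Adj e f → e ∈ E ∧ f ∈ E)
    (v : V) :
    #{p ∈ F.edgeFinset | ∀ a ∈ p, v ∈ a} = #(F.induce ↑{g ∈ E | v ∈ g}).edgeFinset := by
  rw [← card_filter_edgeFinset_toFinset_subset]
  congr 1
  refine filter_congr fun p hp => ?_
  induction p with
  | _ a b =>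
    have := hE a b (mem_edgeFinset.1 hp)
    simp [Sym2.toFinset_mk_eq, insert_subset_iff, this]

omit [Fintype V] in
lemma IsJoinForest.isTree_induce {E : Finset (Finset V)} {J : SimpleGraph (Finset V)}
    (hJ : IsJoinForest E J) {v : V} {e : Finset V} (he : e ∈ E) (hv : v ∈ e) :
    (J.induce ↑{g ∈ E | v ∈ g}).IsTree := by
  refine ⟨(connected_iff _).2 ⟨?_, ⟨⟨e, by simp [he, hv]⟩⟩⟩, hJ.1.1.induce _⟩
  rintro ⟨x, hx⟩ ⟨y, hy⟩
  simp only [coe_filter, Set.mem_ofPred_eq] at hx hy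
  obtain ⟨⟨p⟩, hpath⟩ := hJ.2 x hx.1 y hy.1 v hx.2 hy.2
  have hsupp : J.support ⊆ ↑E := fun a ⟨b, hab⟩ => (hJ.1.2 a b hab).1
  have hq : ∀ z ∈ p.bypass.support, z ∈ (↑{g ∈ E | v ∈ g} : Set (Finset V)) := fun z hz =>
    mem_filter.2 ⟨p.bypass.support_subset_of_start_mem hsupp hx.1 z hz,
      hpath _ p.bypass_isPath z hz⟩
  exact ⟨p.bypass.induce _ hq⟩

omit [Fintype V] in
lemma IsJoinForest.card_edgeFinset_induce {E : Finset (Finset V)} {J : SimpleGraph (Finset V)}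
    [DecidableRel J.Adj] (hJ : IsJoinForest E J) (v : V) :
    #(J.induce ↑{g ∈ E | v ∈ g}).edgeFinset = hdeg E v - 1 := by
  rcases ({g ∈ E | v ∈ g} : Finset _).eq_empty_or_nonempty with h | ⟨e, he⟩
  · have : IsEmpty (↑{g ∈ E | v ∈ g} : Set (Finset V)) := by simp [h]
    simp [hdeg, h, Subsingleton.elim _ (⊥ : SimpleGraph _)]
  · rw [mem_filter] at he
    have := (hJ.isTree_induce he.1 he.2).card_edgeFinset
    simp only [coe_sort_coe, Fintype.card_coe] at this
    rw [hdeg]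
    omega

/-- If `J` is a join forest of a hypergraph `H`, then the weight of `J` equals
the weight `w(H)` of `H`. -/
theorem joinForest_weight_eq_hweight (E : Finset (Finset V)) (J : SimpleGraph (Finset V))
    (hJ : IsJoinForest E J) :
    fweight J = hweight E := by
  classical
  rw [fweight_eq_sum_card_filter_edgeFinset, hweight_eq_sum_hdeg_sub_one]
  refine sum_congr rfl fun v _ => ?_
  rw [card_filter_edgeFinset_eq_card_edgeFinset_induce hJ.1.2, hJ.card_edgeFinset_induce]
end

section
/- (Insertion step of Theorem 3.2) Let H = (V, E) be a hypergraph, let e ⊆ V with e ∉ E, and let S be a maximum-weight spanning forest of wg(H) satisfying Invariant (★). Then there exists a maximum-weight spanning forest S' of wg((V, E ∪ {e})) satisfying Invariant (★) such that every edge of S' \ S is incident to the node e and the symmetric difference of S and S' contains at most 2·(2^{|e|} − 1) edges. -/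
/-!
Lemma 3.1(a) (Bernstein–Goodman): a hypergraph `H` is acyclic iff the weight `w(H)`
equals the weight of a maximum-weight spanning forest of the weighted hyperedge
graph `wg(H)`.

A hypergraph on a finite vertex type `V` is given by its finite set `E` of
hyperedges, each a `Finset V`.
-/

variable {V : Type*} [Fintype V] [DecidableEq V]

/-- Invariant (★): for every hyperedge `e` and every nonempty `A ⊆ e`, the forest
`S` has at most two edges `(e, f)` with `e ∩ f = A`. -/
def InvariantStar (E : Finset (Finset V)) (S : SimpleGraph (Finset V)) : Prop :=
  ∀ e ∈ E, ∀ A : Finset V, A.Nonempty → A ⊆ e →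
    {f : Finset V | S.Adj e f ∧ e ∩ f = A}.ncard ≤ 2

/-!
Let `T` be a maximum-weight spanning forest of `wg (insert e E)` whose edge set is as close as
possible to that of `S`, and, among those, one minimising `leafPotential S T e`. Every step is an
exchange `T.deleteEdges {s(a, b)} ⊔ edge c d` that keeps `T` a maximum-weight spanning forest.

* An edge `(f, g)` of `T` with `f, g ≠ e` lies in `S`: otherwise the `S`-path from `f` to `g` has
  an edge `(x, y)` crossing the cut of `T` without `(f, g)`; maximality of `S` gives
  `|f ∩ g| ≤ |x ∩ y|`, and replacing `(f, g)` by `(x, y)` brings `T` closer to `S`.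
* The labels `e ∩ f` of the edges `(e, f)` of `T` are distinct: if `e ∩ f₁ = e ∩ f₂`, replacing
  `(e, f₂)` by `(f₁, f₂)` either brings `T` closer to `S` or creates a new edge avoiding `e`.
  So at most `2 ^ |e| - 1` edges are added, and at most as many are removed, since a spanning
  forest has `#nodes - #components` edges and inserting `e` only merges components.
* If `(e, g)` is an edge of `T` and `g` had two more `T`-neighbours `f` with `g ∩ f = g ∩ e`,
  these are `S`-edges, and by (★) for `S` one of them is closer than `g` to a leaf of the forest
  of `S`-edges labelled `g ∩ e`; moving `(e, g)` to `(e, f)` lowers the potential. Together with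
  the distinct labels at `e`, this gives (★) for `T`.
-/

open scoped symmDiff

namespace SimpleGraph

variable {α : Type*} {G : SimpleGraph α} {a b c d u v : α}

lemma deleteEdges_sup_edge_of_adj (h : G.Adj a b) : G.deleteEdges {s(a, b)} ⊔ edge a b = G := by
  ext x y
  simp only [sup_adj, deleteEdges_adj, edge_adj, Set.mem_singleton_iff, Sym2.eq_iff]
  constructor
  · rintro (⟨h, -⟩ | ⟨⟨rfl, rfl⟩ | ⟨rfl, rfl⟩, -⟩)
    exacts [h, h, h.symm]
  · intro hxy
    by_cases hab : (x = a ∧ y = b) ∨ (x = b ∧ y = a)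
    · exact Or.inr ⟨hab, hxy.ne⟩
    · exact Or.inl ⟨hxy, hab⟩

lemma reachable_edge (a b : α) : (edge a b).Reachable a b := by
  by_cases hab : a = b
  · exact hab ▸ Reachable.refl a
  · exact Adj.reachable (by simp [edge_adj, hab])

lemma reachable_sup_edge_iff :
    (G ⊔ edge a b).Reachable u v ↔ G.Reachable u v ∨
      (G.Reachable u a ∧ G.Reachable b v) ∨ (G.Reachable u b ∧ G.Reachable a v) := by
  constructor
  · rw [reachable_iff_reflTransGen]
    intro h
    induction h with
    | refl => exact Or.inl (Reachable.refl u)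
    | tail _ hadj ih =>
      simp only [← ConnectedComponent.eq] at ih ⊢
      rw [sup_adj, edge_adj] at hadj
      rcases hadj with hadj | ⟨⟨rfl, rfl⟩ | ⟨rfl, rfl⟩, -⟩
      · rw [← ConnectedComponent.eq.mpr hadj.reachable]; exact ih
      all_goals grind
  · have hle : ∀ {x y}, G.Reachable x y → (G ⊔ edge a b).Reachable x y :=
      fun h => h.mono le_sup_left
    have hab : (G ⊔ edge a b).Reachable a b := (reachable_edge a b).mono le_sup_right
    rintro (h | ⟨h1, h2⟩ | ⟨h1, h2⟩)
    · exact hle h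
    · exact ((hle h1).trans hab).trans (hle h2)
    · exact ((hle h1).trans hab.symm).trans (hle h2)

lemma reachable_sup_edge_eq (hc : G.Reachable c a) (hd : G.Reachable d b) :
    (G ⊔ edge c d).Reachable = (G ⊔ edge a b).Reachable := by
  ext u v
  rw [reachable_sup_edge_iff, reachable_sup_edge_iff]
  simp only [← ConnectedComponent.eq] at hc hd ⊢
  rw [hc, hd]

lemma IsAcyclic.not_reachable_deleteEdges (hG : G.IsAcyclic) (h : G.Adj a b) :
    ¬(G.deleteEdges {s(a, b)}).Reachable a b :=
  isBridge_iff.mp (isAcyclic_iff_forall_adj_isBridge.mp hG h)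

lemma edgeSet_deleteEdges_sup_edge (hcd : c ≠ d) :
    (G.deleteEdges {s(a, b)} ⊔ edge c d).edgeSet = insert s(c, d) (G.edgeSet \ {s(a, b)}) := by
  rw [edgeSet_sup, edgeSet_deleteEdges, edgeSet_edge_of_ne hcd, Set.union_singleton]

section Exchange

variable (hab : G.Adj a b) (hc : (G.deleteEdges {s(a, b)}).Reachable c a)
  (hd : (G.deleteEdges {s(a, b)}).Reachable d b)
include hab hc hd

lemma reachable_deleteEdges_sup_edge :
    (G.deleteEdges {s(a, b)} ⊔ edge c d).Reachable = G.Reachable := by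
  rw [reachable_sup_edge_eq hc hd, deleteEdges_sup_edge_of_adj hab]

variable (hG : G.IsAcyclic)
include hG

lemma IsAcyclic.not_reachable_deleteEdges_of_reachable : ¬(G.deleteEdges {s(a, b)}).Reachable c d :=
  fun h => hG.not_reachable_deleteEdges hab ((hc.symm.trans h).trans hd)

lemma IsAcyclic.deleteEdges_sup_edge : (G.deleteEdges {s(a, b)} ⊔ edge c d).IsAcyclic :=
  (hG.anti (deleteEdges_le _)).sup_edge_of_not_reachable
    (hG.not_reachable_deleteEdges_of_reachable hab hc hd)

lemma IsAcyclic.not_adj_of_reachable_deleteEdges (hne : s(c, d) ≠ s(a, b)) : ¬G.Adj c d :=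
  fun h => hG.not_reachable_deleteEdges_of_reachable hab hc hd (Adj.reachable (by simp [h, hne]))

end Exchange

lemma card_connectedComponent_bot : Nat.card (⊥ : SimpleGraph α).ConnectedComponent = Nat.card α :=
  (Nat.card_eq_of_bijective _ ⟨fun _ _ h => reachable_bot.mp (ConnectedComponent.eq.mp h),
    fun C => C.ind fun v => ⟨v, rfl⟩⟩).symm

lemma card_connectedComponent_eq_of_reachable_eq {H : SimpleGraph α}
    (h : G.Reachable = H.Reachable) :
    Nat.card G.ConnectedComponent = Nat.card H.ConnectedComponent := by
  unfold ConnectedComponent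
  rw [h]

lemma card_connectedComponent_sup_edge [Finite α] (h : ¬G.Reachable a b) :
    Nat.card (G ⊔ edge a b).ConnectedComponent + 1 = Nat.card G.ConnectedComponent := by
  classical
  have hmk : ∀ u v, (G ⊔ edge a b).connectedComponentMk u = (G ⊔ edge a b).connectedComponentMk v ↔
      G.connectedComponentMk u = G.connectedComponentMk v ∨
      (G.connectedComponentMk u = G.connectedComponentMk a ∧
        G.connectedComponentMk b = G.connectedComponentMk v) ∨
      (G.connectedComponentMk u = G.connectedComponentMk b ∧
        G.connectedComponentMk a = G.connectedComponentMk v) := fun u v => by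
    simp only [ConnectedComponent.eq]
    exact reachable_sup_edge_iff
  rw [← ConnectedComponent.eq] at h
  -- the components of `G` other than that of `b` are those of `G ⊔ edge a b`
  let σ : G.ConnectedComponent → Option (G ⊔ edge a b).ConnectedComponent := fun C =>
    if C = G.connectedComponentMk b then none
    else some (C.map (Hom.ofLE le_sup_left))
  have hinj : σ.Injective := by
    refine ConnectedComponent.ind₂ fun u v huv => ?_
    simp only [σ, ConnectedComponent.map_mk, Hom.coe_ofLE, id] at huv
    split_ifs at huv with hu hv hv
    · exact hu.trans hv.symm
    · simp only [Option.some.injEq, hmk] at huv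
      grind
  have hsurj : σ.Surjective := by
    rintro (_ | C)
    · exact ⟨G.connectedComponentMk b, by simp [σ]⟩
    refine C.ind fun v => ?_
    by_cases hv : G.connectedComponentMk v = G.connectedComponentMk b
    · refine ⟨G.connectedComponentMk a, ?_⟩
      simp only [σ, if_neg h, ConnectedComponent.map_mk, Hom.coe_ofLE, id, Option.some.injEq, hmk]
      grind
    · exact ⟨G.connectedComponentMk v, by simp [σ, hv]⟩
  rw [Nat.card_eq_of_bijective σ ⟨hinj, hsurj⟩, Finite.card_option]

lemma IsAcyclic.ncard_edgeSet_add_card_connectedComponent [Finite α] (hG : G.IsAcyclic) :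
    G.edgeSet.ncard + Nat.card G.ConnectedComponent = Nat.card α := by
  obtain ⟨n, hn⟩ : ∃ n, G.edgeSet.ncard = n := ⟨_, rfl⟩
  induction n generalizing G with
  | zero =>
    rw [edgeSet_eq_empty.mp ((Set.ncard_eq_zero).mp hn)]
    simp [card_connectedComponent_bot]
  | succ n ih =>
    obtain ⟨a, b, hp⟩ :=
      Sym2.exists.mp (Set.nonempty_of_ncard_ne_zero (by omega : G.edgeSet.ncard ≠ 0))
    have hab : G.Adj a b := hp
    have hDn : (G.deleteEdges {s(a, b)}).edgeSet.ncard = n := by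
      rw [edgeSet_deleteEdges, Set.ncard_sdiff_singleton_of_mem hp, hn, Nat.add_sub_cancel]
    have hD := ih (hG.anti (deleteEdges_le _)) hDn
    have hcard := card_connectedComponent_sup_edge (hG.not_reachable_deleteEdges hab)
    rw [deleteEdges_sup_edge_of_adj hab] at hcard
    omega

lemma IsAcyclic.exists_reachable_subsingleton_neighborSet [Fintype α] (hG : G.IsAcyclic) (u : α) :
    ∃ t, G.Reachable u t ∧ (G.neighborSet t).Subsingleton := by
  set L := {n | ∃ t, ∃ p : G.Walk u t, p.IsPath ∧ p.length = n}
  have hbdd : BddAbove L := ⟨Fintype.card α, by rintro _ ⟨t, p, hp, rfl⟩; exact hp.length_lt.le⟩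
  obtain ⟨t, p, hp, hlen⟩ := Nat.sSup_mem (s := L) ⟨0, u, .nil, .nil, rfl⟩ hbdd
  have key : ∀ w, G.Adj t w → w = p.penultimate := fun w hw =>
    hG.eq_penultimate_of_adj_end hp hw <| by
      by_contra hns
      have := le_csSup hbdd ⟨w, p.concat hw, hp.concat hns hw, rfl⟩
      simp only [Walk.length_concat] at this
      omega
  exact ⟨t, ⟨p⟩, fun x hx y hy => (key x hx).trans (key y hy).symm⟩

noncomputable def leafDist (G : SimpleGraph α) (u : α) : ℕ :=
  sInf {n | ∃ t, ∃ p : G.Walk u t, (G.neighborSet t).Subsingleton ∧ p.length = n}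

lemma IsAcyclic.exists_adj_leafDist_lt [Fintype α] (hG : G.IsAcyclic)
    (hu : ¬(G.neighborSet u).Subsingleton) : ∃ v, G.Adj u v ∧ G.leafDist v < G.leafDist u := by
  obtain ⟨t₀, ⟨p₀⟩, ht₀⟩ := hG.exists_reachable_subsingleton_neighborSet u
  obtain ⟨t, p, ht, hp⟩ := Nat.sInf_mem
    (s := {n | ∃ t, ∃ p : G.Walk u t, (G.neighborSet t).Subsingleton ∧ p.length = n})
    ⟨_, t₀, p₀, ht₀, rfl⟩
  cases p with
  | nil => exact absurd ht hu
  | cons h q =>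
    refine ⟨_, h, ?_⟩
    have hv : G.leafDist _ ≤ q.length := Nat.sInf_le ⟨t, q, ht, rfl⟩
    have hu : G.leafDist u = q.length + 1 := hp.symm
    omega

noncomputable def edgeDist (S T : SimpleGraph α) : ℕ := (S.edgeSet ∆ T.edgeSet).ncard

lemma edgeDist_le_two_mul [Finite α] {S T : SimpleGraph α}
    (h : S.edgeSet.ncard ≤ T.edgeSet.ncard) : edgeDist S T ≤ 2 * (T.edgeSet \ S.edgeSet).ncard := by
  have hS := Set.ncard_inter_add_ncard_sdiff_eq_ncard S.edgeSet T.edgeSet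
  have hT := Set.ncard_inter_add_ncard_sdiff_eq_ncard T.edgeSet S.edgeSet
  rw [Set.inter_comm] at hT
  rw [edgeDist, Set.symmDiff_def, Set.ncard_union_eq disjoint_sdiff_sdiff]
  omega

section edgeDist

variable [Finite α] {S T T' : SimpleGraph α} {p q : Sym2 α}
  (hT' : T'.edgeSet = insert q (T.edgeSet \ {p})) (hpT : p ∈ T.edgeSet) (hpS : p ∉ S.edgeSet)
  (hqT : q ∉ T.edgeSet)
include hT' hpT hpS hqT

lemma edgeDist_lt_of_edgeSet_eq_insert (hqS : q ∈ S.edgeSet) : edgeDist S T' < edgeDist S T := by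
  refine Set.ncard_lt_ncard (Set.ssubset_iff_subset_ne.mpr ⟨fun x hx => ?_, fun h => ?_⟩)
  · simp only [Set.mem_symmDiff, hT', Set.mem_insert_iff, Set.mem_sdiff,
      Set.mem_singleton_iff] at hx ⊢
    grind
  · have hp : p ∉ S.edgeSet ∆ T'.edgeSet := by
      simp only [Set.mem_symmDiff, hT', Set.mem_insert_iff, Set.mem_sdiff, Set.mem_singleton_iff]
      grind
    exact hp (h ▸ Set.mem_symmDiff.mpr (Or.inr ⟨hpT, hpS⟩))

lemma edgeDist_eq_of_edgeSet_eq_insert (hqS : q ∉ S.edgeSet) : edgeDist S T' = edgeDist S T := by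
  have hp : p ∈ S.edgeSet ∆ T.edgeSet := Set.mem_symmDiff.mpr (Or.inr ⟨hpT, hpS⟩)
  have : S.edgeSet ∆ T'.edgeSet = insert q (S.edgeSet ∆ T.edgeSet \ {p}) := by
    ext x
    simp only [Set.mem_symmDiff, hT', Set.mem_insert_iff, Set.mem_sdiff, Set.mem_singleton_iff]
    grind
  rw [edgeDist, edgeDist, this, Set.ncard_insert_of_notMem (by simp [Set.mem_symmDiff, hqS, hqT]),
    Set.ncard_sdiff_singleton_add_one hp]

end edgeDist

lemma neighborSet_deleteEdges_sup_edge {e f g : α} (hf : f ≠ e) :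
    (G.deleteEdges {s(e, g)} ⊔ edge e f).neighborSet e = insert f (G.neighborSet e \ {g}) := by
  ext h
  simp only [mem_neighborSet, sup_adj, deleteEdges_adj, edge_adj, Set.mem_insert_iff,
    Set.mem_sdiff, Set.mem_singleton_iff, Sym2.eq_iff]
  grind [G.loopless]

lemma Walk.IsPath.exists_adj_boundary {P : α → Prop} {u v : α} {p : G.Walk u v} (hp : p.IsPath)
    (hu : P u) (hv : ¬P v) :
    ∃ x y, G.Adj x y ∧ P x ∧ ¬P y ∧
      (G.deleteEdges {s(x, y)}).Reachable u x ∧ (G.deleteEdges {s(x, y)}).Reachable y v := by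
  induction p with
  | nil => exact absurd hu hv
  | @cons u m v h q ih =>
    by_cases hm : P m
    · obtain ⟨x, y, hxy, hx, hy, hux, hyv⟩ := ih hp.of_cons hm hv
      have hne : s(u, m) ≠ s(x, y) := by
        rintro heq
        rcases Sym2.eq_iff.mp heq with ⟨-, rfl⟩ | ⟨rfl, -⟩ <;> contradiction
      exact ⟨x, y, hxy, hx, hy, (Adj.reachable (by simp [h, hne])).trans hux, hyv⟩
    · refine ⟨u, m, h, hu, hm, .refl u, ⟨q.toDeleteEdge s(u, m) fun hmem => ?_⟩⟩
      exact ((Walk.cons_isPath_iff h q).mp hp).2 (q.fst_mem_support_of_mem_edges hmem)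

end SimpleGraph

open SimpleGraph

section Hypergraph

variable {W : Type*}

lemma IsSpanningForest.ncard_edgeSet_le [Finite W] {G G' S T : SimpleGraph (Finset W)}
    (hS : IsSpanningForest G S) (hGG' : G ≤ G') (hT : IsSpanningForest G' T) :
    S.edgeSet.ncard ≤ T.edgeSet.ncard := by
  have hS' := hS.2.1.ncard_edgeSet_add_card_connectedComponent
  have hT' := hT.2.1.ncard_edgeSet_add_card_connectedComponent
  have hSG := card_connectedComponent_eq_of_reachable_eq (funext₂ fun a b => propext (hS.2.2 a b))
  have hTG := card_connectedComponent_eq_of_reachable_eq (funext₂ fun a b => propext (hT.2.2 a b))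
  have := ConnectedComponent.card_le_card_of_le hGG'
  omega

lemma IsSpanningForest.deleteEdges_sup_edge {H T : SimpleGraph (Finset W)} {a b c d : Finset W}
    (hT : IsSpanningForest H T) (hab : T.Adj a b) (hc : (T.deleteEdges {s(a, b)}).Reachable c a)
    (hd : (T.deleteEdges {s(a, b)}).Reachable d b) (hcd : H.Adj c d) :
    IsSpanningForest H (T.deleteEdges {s(a, b)} ⊔ edge c d) :=
  ⟨sup_le ((deleteEdges_le _).trans hT.1) ((H.edge_le_iff).mpr (Or.inr hcd)),
    hT.2.1.deleteEdges_sup_edge hab hc hd,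
    fun u v => by rw [reachable_deleteEdges_sup_edge hab hc hd]; exact hT.2.2 u v⟩

variable [DecidableEq W]

@[simp] lemma interWt_mk (a b : Finset W) : interWt s(a, b) = (a ∩ b).card := rfl

lemma wg_mono {E E' : Finset (Finset W)} (h : E ⊆ E') : wg E ≤ wg E' :=
  fun _ _ hadj => ⟨h hadj.1, h hadj.2.1, hadj.2.2⟩

lemma wg_adj_of_adj_insert {E : Finset (Finset W)} {e f g : Finset W}
    (h : (wg (insert e E)).Adj f g) (hf : f ≠ e) (hg : g ≠ e) : (wg E).Adj f g :=
  ⟨(Finset.mem_insert.mp h.1).resolve_left hf, (Finset.mem_insert.mp h.2.1).resolve_left hg, h.2.2⟩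

def labelGraph (S : SimpleGraph (Finset W)) (A : Finset W) : SimpleGraph (Finset W) where
  Adj f g := S.Adj f g ∧ f ∩ g = A
  symm := ⟨fun _ _ h => ⟨h.1.symm, by rw [Finset.inter_comm]; exact h.2⟩⟩
  loopless := ⟨fun _ h => S.loopless.irrefl _ h.1⟩

@[simp] lemma labelGraph_adj {S : SimpleGraph (Finset W)} {A f g : Finset W} :
    (labelGraph S A).Adj f g ↔ S.Adj f g ∧ f ∩ g = A := Iff.rfl

variable [Fintype W]

lemma fweight_eq_add_of_edgeSet_eq_insert {F F' : SimpleGraph (Finset W)} {q : Sym2 (Finset W)}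
    (h : F.edgeSet = insert q F'.edgeSet) (hq : q ∉ F'.edgeSet) :
    fweight F = fweight F' + interWt q := by
  have : (Set.toFinite F.edgeSet).toFinset = insert q (Set.toFinite F'.edgeSet).toFinset := by
    ext
    simp [h]
  rw [fweight, fweight, this, Finset.sum_insert (by simpa using hq), add_comm]

section Exchange

variable {H T : SimpleGraph (Finset W)} {a b c d : Finset W}
  (hab : T.Adj a b) (hc : (T.deleteEdges {s(a, b)}).Reachable c a)
  (hd : (T.deleteEdges {s(a, b)}).Reachable d b)
include hab hc hd

lemma IsSpanningForest.fweight_deleteEdges_sup_edge (hT : IsSpanningForest H T)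
    (hcd : H.Adj c d) :
    fweight (T.deleteEdges {s(a, b)} ⊔ edge c d) + (a ∩ b).card = fweight T + (c ∩ d).card := by
  have hwT := fweight_eq_add_of_edgeSet_eq_insert (F := T) (F' := T.deleteEdges {s(a, b)})
    (by rw [edgeSet_deleteEdges, Set.insert_sdiff_singleton,
      Set.insert_eq_of_mem ((T.mem_edgeSet).mpr hab)])
    (by simp)
  have hwT' := fweight_eq_add_of_edgeSet_eq_insert (F' := T.deleteEdges {s(a, b)})
    (F := T.deleteEdges {s(a, b)} ⊔ edge c d)
    (by rw [edgeSet_sup, edgeSet_edge_of_ne hcd.ne, Set.union_singleton])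
    fun h => hT.2.1.not_reachable_deleteEdges_of_reachable hab hc hd (Adj.reachable h)
  rw [hwT, hwT', interWt_mk, interWt_mk]
  ring

lemma IsMaxSpanningForest.card_inter_le (hT : IsMaxSpanningForest H T) (hcd : H.Adj c d) :
    (c ∩ d).card ≤ (a ∩ b).card := by
  have := hT.2 _ (hT.1.deleteEdges_sup_edge hab hc hd hcd)
  have := hT.1.fweight_deleteEdges_sup_edge hab hc hd hcd
  omega

lemma IsMaxSpanningForest.deleteEdges_sup_edge (hT : IsMaxSpanningForest H T) (hcd : H.Adj c d)
    (hw : (a ∩ b).card ≤ (c ∩ d).card) :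
    IsMaxSpanningForest H (T.deleteEdges {s(a, b)} ⊔ edge c d) := by
  refine ⟨hT.1.deleteEdges_sup_edge hab hc hd hcd, fun T' hT' => ?_⟩
  have := hT.2 T' hT'
  have := hT.1.fweight_deleteEdges_sup_edge hab hc hd hcd
  omega

end Exchange

lemma exists_isMaxSpanningForest (G : SimpleGraph (Finset W)) : ∃ T, IsMaxSpanningForest G T := by
  obtain ⟨F, hFG, hF, hFr⟩ := G.exists_isAcyclic_reachable_eq_le
  obtain ⟨T, hT, hmax⟩ := Set.exists_max_image {T | IsSpanningForest G T} fweight (Set.toFinite _)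
    ⟨F, hFG, hF, fun a b => by rw [hFr]⟩
  exact ⟨T, hT, hmax⟩

def IsNearestMaxForest (G S T : SimpleGraph (Finset W)) : Prop :=
  IsMaxSpanningForest G T ∧ ∀ T', IsMaxSpanningForest G T' → edgeDist S T ≤ edgeDist S T'

lemma exists_isNearestMaxForest_forall_le (G S : SimpleGraph (Finset W))
    (φ : SimpleGraph (Finset W) → ℕ) :
    ∃ T, IsNearestMaxForest G S T ∧
      ∀ T', IsMaxSpanningForest G T' → edgeDist S T' = edgeDist S T → φ T ≤ φ T' := by
  obtain ⟨T₀, hT₀⟩ := exists_isMaxSpanningForest G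
  obtain ⟨T, hT, hmin⟩ := Set.exists_min_image {T | IsMaxSpanningForest G T}
    (fun T => toLex (edgeDist S T, φ T)) (Set.toFinite _) ⟨T₀, hT₀⟩
  have hmin' := fun T' hT' => Prod.Lex.toLex_le_toLex'.mp (hmin T' hT')
  exact ⟨T, ⟨hT, fun T' hT' => (hmin' T' hT').1⟩, fun T' hT' h => (hmin' T' hT').2 h.symm⟩

noncomputable def leafPotential (S T : SimpleGraph (Finset W)) (e : Finset W) : ℕ :=
  ∑ᶠ g ∈ T.neighborSet e, (labelGraph S (e ∩ g)).leafDist g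

lemma leafPotential_deleteEdges_sup_edge {S T : SimpleGraph (Finset W)} {e f g : Finset W}
    (hg : T.Adj e g) (hf : ¬T.Adj e f) (hfe : f ≠ e) :
    leafPotential S (T.deleteEdges {s(e, g)} ⊔ edge e f) e + (labelGraph S (e ∩ g)).leafDist g =
      leafPotential S T e + (labelGraph S (e ∩ f)).leafDist f := by
  have hT : leafPotential S T e = (labelGraph S (e ∩ g)).leafDist g +
      ∑ᶠ h ∈ T.neighborSet e \ {g}, (labelGraph S (e ∩ h)).leafDist h := by
    rw [← finsum_mem_insert (fun h => (labelGraph S (e ∩ h)).leafDist h) (fun h => h.2 rfl)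
      (Set.toFinite _), Set.insert_sdiff_singleton,
      Set.insert_eq_of_mem (show g ∈ T.neighborSet e from hg), leafPotential]
  rw [hT, leafPotential, neighborSet_deleteEdges_sup_edge hfe,
    finsum_mem_insert _ (fun h => hf h.1) (Set.toFinite _)]
  ring

lemma exists_leafDist_lt_of_invariantStar {E : Finset (Finset W)} {S : SimpleGraph (Finset W)}
    (hS : IsSpanningForest (wg E) S) (hstar : InvariantStar E S) {A g f₁ f₂ : Finset W}
    (hg : g ∈ E) (h₁ : S.Adj g f₁) (h₂ : S.Adj g f₂) (hne : f₁ ≠ f₂) (hl₁ : g ∩ f₁ = A)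
    (hl₂ : g ∩ f₂ = A) :
    ∃ f, (f = f₁ ∨ f = f₂) ∧ (labelGraph S A).leafDist f < (labelGraph S A).leafDist g := by
  have hF : (labelGraph S A).IsAcyclic := hS.2.1.anti fun _ _ h => (labelGraph_adj.mp h).1
  obtain ⟨f, hgf, hlt⟩ := hF.exists_adj_leafDist_lt fun hsub =>
    hne (hsub (labelGraph_adj.mpr ⟨h₁, hl₁⟩) (labelGraph_adj.mpr ⟨h₂, hl₂⟩))
  refine ⟨f, ?_, hlt⟩
  by_contra! hf
  have hA : A.Nonempty := hl₁ ▸ (hS.1 h₁).2.2.2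
  exact (hstar g hg A hA (hl₁ ▸ Finset.inter_subset_left)).not_gt <| (Set.two_lt_ncard_iff).mpr
    ⟨f₁, f₂, f, ⟨h₁, hl₁⟩, ⟨h₂, hl₂⟩, labelGraph_adj.mp hgf, hne, Ne.symm hf.1, Ne.symm hf.2⟩

section Insertion

variable {E : Finset (Finset W)} {e : Finset W} {S T : SimpleGraph (Finset W)}

theorem IsNearestMaxForest.adj_of_ne (hT : IsNearestMaxForest (wg (insert e E)) S T)
    (hS : IsMaxSpanningForest (wg E) S) {f g : Finset W} (hfg : T.Adj f g) (hf : f ≠ e)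
    (hg : g ≠ e) : S.Adj f g := by
  by_contra hSfg
  have hfgE : (wg E).Adj f g := wg_adj_of_adj_insert (hT.1.1.1 hfg) hf hg
  have hsplit := hT.1.1.2.1.not_reachable_deleteEdges hfg
  obtain ⟨p⟩ := (hS.1.2.2 f g).2 hfgE.reachable
  obtain ⟨x, y, hxy, hx, hy, hfx, hyg⟩ := p.bypass_isPath.exists_adj_boundary
    (P := (T.deleteEdges {s(f, g)}).Reachable f) (Reachable.refl f) hsplit
  have hTfy : T.Reachable f y := (hT.1.1.2.2 f y).2 <|
    ((hS.1.2.2 f y).1 ((hfx.mono (deleteEdges_le _)).trans hxy.reachable)).mono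
      (wg_mono (Finset.subset_insert _ _))
  have hgy : (T.deleteEdges {s(f, g)}).Reachable g y := by
    rw [← deleteEdges_sup_edge_of_adj hfg, reachable_sup_edge_iff] at hTfy
    rcases hTfy with h | ⟨-, h⟩ | ⟨h, -⟩
    exacts [absurd h hy, h, absurd h hsplit]
  have hne : s(x, y) ≠ s(f, g) := fun h => hSfg ((S.mem_edgeSet).mp (h ▸ (S.mem_edgeSet).mpr hxy))
  have hxyT : ¬T.Adj x y := hT.1.1.2.1.not_adj_of_reachable_deleteEdges hfg hx.symm hgy.symm hne
  have hw := hS.card_inter_le hxy hfx hyg.symm hfgE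
  have hT' := hT.1.deleteEdges_sup_edge hfg hx.symm hgy.symm
    (wg_mono (Finset.subset_insert _ _) (hS.1.1 hxy)) hw
  exact (hT.2 _ hT').not_gt
    (edgeDist_lt_of_edgeSet_eq_insert (edgeSet_deleteEdges_sup_edge hxy.ne) hfg hSfg hxyT hxy)

theorem IsNearestMaxForest.mem_of_mem_edgeSet_sdiff (hT : IsNearestMaxForest (wg (insert e E)) S T)
    (hS : IsMaxSpanningForest (wg E) S) {p : Sym2 (Finset W)} (hp : p ∈ T.edgeSet \ S.edgeSet) :
    e ∈ p := by
  induction p using Sym2.ind with | _ f g => ?_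
  by_contra h
  simp only [Sym2.mem_iff, not_or] at h
  exact hp.2 (hT.adj_of_ne hS hp.1 (Ne.symm h.1) (Ne.symm h.2))

theorem IsNearestMaxForest.injOn_inter (hT : IsNearestMaxForest (wg (insert e E)) S T)
    (he : e ∉ E) (hS : IsMaxSpanningForest (wg E) S) : Set.InjOn (e ∩ ·) (T.neighborSet e) := by
  intro f₁ (h₁ : T.Adj e f₁) f₂ (h₂ : T.Adj e f₂) hlab
  replace hlab : e ∩ f₁ = e ∩ f₂ := hlab
  by_contra hne
  have hG₁ := hT.1.1.1 h₁
  have hG₂ := hT.1.1.1 h₂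
  have hsub : e ∩ f₂ ⊆ f₁ ∩ f₂ :=
    Finset.subset_inter (hlab ▸ Finset.inter_subset_right) Finset.inter_subset_right
  have hf₁₂ : (wg (insert e E)).Adj f₁ f₂ := ⟨hG₁.2.1, hG₂.2.1, hne, hG₂.2.2.2.mono hsub⟩
  have hD : (T.deleteEdges {s(e, f₂)}).Reachable f₁ e :=
    (Adj.reachable (by simp [h₁, hne, hG₂.2.2.1])).symm
  have hT' := hT.1.deleteEdges_sup_edge h₂ hD (.refl f₂) hf₁₂ (Finset.card_le_card hsub)
  have hqT : ¬T.Adj f₁ f₂ :=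
    hT.1.1.2.1.not_adj_of_reachable_deleteEdges h₂ hD (.refl f₂) (by simp [hne, hG₁.2.2.1.symm])
  have hpS : s(e, f₂) ∉ S.edgeSet := fun h => he (hS.1.1 h).1
  have hE := edgeSet_deleteEdges_sup_edge (G := T) (a := e) (b := f₂) hne
  by_cases hqS : S.Adj f₁ f₂
  · exact (hT.2 _ hT').not_gt (edgeDist_lt_of_edgeSet_eq_insert hE h₂ hpS hqT hqS)
  · have hT'' : IsNearestMaxForest (wg (insert e E)) S (T.deleteEdges {s(e, f₂)} ⊔ edge f₁ f₂) :=
      ⟨hT', fun T'' h => (edgeDist_eq_of_edgeSet_eq_insert hE h₂ hpS hqT hqS).symm ▸ hT.2 T'' h⟩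
    exact hqS (hT''.adj_of_ne hS (by simp [edge_adj, hne]) hG₁.2.2.1.symm hG₂.2.2.1.symm)

theorem IsNearestMaxForest.leafDist_le_of_adj (hT : IsNearestMaxForest (wg (insert e E)) S T)
    (he : e ∉ E) (hS : IsMaxSpanningForest (wg E) S)
    (hmin : ∀ T', IsMaxSpanningForest (wg (insert e E)) T' → edgeDist S T' = edgeDist S T →
      leafPotential S T e ≤ leafPotential S T' e)
    {f g : Finset W} (hg : T.Adj e g) (hgf : T.Adj g f) (hfe : f ≠ e) (hlf : g ∩ f = g ∩ e) :
    (labelGraph S (g ∩ e)).leafDist g ≤ (labelGraph S (g ∩ e)).leafDist f := by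
  have hge : g ≠ e := (hT.1.1.1 hg).2.2.1.symm
  have hsub : e ∩ g ⊆ e ∩ f := by
    rw [Finset.inter_comm e g, ← hlf]
    exact Finset.subset_inter (hlf ▸ Finset.inter_subset_right) Finset.inter_subset_right
  have hD : (T.deleteEdges {s(e, g)}).Reachable f g :=
    (Adj.reachable (by simp [hgf, hfe, hge])).symm
  have hef : (wg (insert e E)).Adj e f :=
    ⟨Finset.mem_insert_self _ _, (hT.1.1.1 hgf).2.1, hfe.symm, (hT.1.1.1 hg).2.2.2.mono hsub⟩
  have hlab : e ∩ f = e ∩ g :=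
    (Finset.eq_of_subset_of_card_le hsub (hT.1.card_inter_le hg (.refl e) hD hef)).symm
  have hT' := hT.1.deleteEdges_sup_edge hg (.refl e) hD hef (Finset.card_le_card hsub)
  have hqT : ¬T.Adj e f :=
    hT.1.1.2.1.not_adj_of_reachable_deleteEdges hg (.refl e) hD (by simp [hgf.ne.symm, hge.symm])
  have hnS : ∀ f, s(e, f) ∉ S.edgeSet := fun f h => he (hS.1.1 h).1
  have hpot := hmin _ hT' <| edgeDist_eq_of_edgeSet_eq_insert
    (edgeSet_deleteEdges_sup_edge hfe.symm) hg (hnS g) hqT (hnS f)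
  have hswap := leafPotential_deleteEdges_sup_edge (S := S) hg hqT hfe
  rw [hlab, Finset.inter_comm e g] at hswap
  omega

theorem IsNearestMaxForest.subsingleton_adj_of_inter_eq
    (hT : IsNearestMaxForest (wg (insert e E)) S T) (he : e ∉ E)
    (hS : IsMaxSpanningForest (wg E) S) (hstar : InvariantStar E S)
    (hmin : ∀ T', IsMaxSpanningForest (wg (insert e E)) T' → edgeDist S T' = edgeDist S T →
      leafPotential S T e ≤ leafPotential S T' e)
    {g : Finset W} (hg : T.Adj e g) : {f | T.Adj g f ∧ g ∩ f = g ∩ e ∧ f ≠ e}.Subsingleton := by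
  rintro f₁ ⟨h₁, hl₁, hf₁⟩ f₂ ⟨h₂, hl₂, hf₂⟩
  by_contra hne
  have hge : g ≠ e := (hT.1.1.1 hg).2.2.1.symm
  have hgE : g ∈ E := (Finset.mem_insert.mp (hT.1.1.1 hg).2.1).resolve_left hge
  obtain ⟨f, hf, hlt⟩ := exists_leafDist_lt_of_invariantStar hS.1 hstar hgE
    (hT.adj_of_ne hS h₁ hge hf₁) (hT.adj_of_ne hS h₂ hge hf₂) hne hl₁ hl₂
  rcases hf with rfl | rfl
  · exact (hT.leafDist_le_of_adj he hS hmin hg h₁ hf₁ hl₁).not_gt hlt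
  · exact (hT.leafDist_le_of_adj he hS hmin hg h₂ hf₂ hl₂).not_gt hlt

theorem IsNearestMaxForest.invariantStar (hT : IsNearestMaxForest (wg (insert e E)) S T)
    (he : e ∉ E) (hS : IsMaxSpanningForest (wg E) S) (hstar : InvariantStar E S)
    (hmin : ∀ T', IsMaxSpanningForest (wg (insert e E)) T' → edgeDist S T' = edgeDist S T →
      leafPotential S T e ≤ leafPotential S T' e) :
    InvariantStar (insert e E) T := by
  intro x hx A hA hAx
  rcases eq_or_ne x e with rfl | hxe
  · refine ((Set.ncard_le_one_iff).mpr fun h₁ h₂ => ?_).trans one_le_two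
    exact hT.injOn_inter he hS h₁.1 h₂.1 (h₁.2.trans h₂.2.symm)
  by_cases hxA : T.Adj e x ∧ x ∩ e = A
  · have hsub : {f | T.Adj x f ∧ x ∩ f = A} ⊆
        insert e {f | T.Adj x f ∧ x ∩ f = x ∩ e ∧ f ≠ e} := by
      rintro f ⟨hf, rfl⟩
      rcases eq_or_ne f e with rfl | hfe
      exacts [Set.mem_insert _ _, Or.inr ⟨hf, hxA.2.symm, hfe⟩]
    calc _ ≤ _ := Set.ncard_le_ncard hsub
      _ ≤ _ + 1 := Set.ncard_insert_le _ _
      _ ≤ 1 + 1 := by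
        gcongr
        exact Set.ncard_le_one_iff_subsingleton.mpr
          (hT.subsingleton_adj_of_inter_eq he hS hstar hmin hxA.1)
  · have hsub : {f | T.Adj x f ∧ x ∩ f = A} ⊆ {f | S.Adj x f ∧ x ∩ f = A} := by
      rintro f ⟨hf, hfA⟩
      exact ⟨hT.adj_of_ne hS hf hxe (by rintro rfl; exact hxA ⟨hf.symm, hfA⟩), hfA⟩
    calc _ ≤ _ := Set.ncard_le_ncard hsub
      _ ≤ 2 := hstar x ((Finset.mem_insert.mp hx).resolve_left hxe) A hA hAx

theorem IsNearestMaxForest.edgeDist_le (hT : IsNearestMaxForest (wg (insert e E)) S T)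
    (he : e ∉ E) (hS : IsMaxSpanningForest (wg E) S) : edgeDist S T ≤ 2 * (2 ^ e.card - 1) := by
  have hnew : T.edgeSet \ S.edgeSet ⊆ (fun f => s(e, f)) '' T.neighborSet e := by
    intro p hp
    obtain ⟨f, rfl⟩ := Sym2.mem_iff_exists.mp (hT.mem_of_mem_edgeSet_sdiff hS hp)
    exact ⟨f, hp.1, rfl⟩
  have hdeg : (T.neighborSet e).ncard ≤ 2 ^ e.card - 1 := by
    calc (T.neighborSet e).ncard ≤ ((e.powerset.erase ∅ : Finset (Finset W)) : Set _).ncard :=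
          Set.ncard_le_ncard_of_injOn (e ∩ ·) (fun f hf => by
            simpa [Finset.nonempty_iff_ne_empty] using (hT.1.1.1 hf).2.2.2)
            (hT.injOn_inter he hS)
      _ = 2 ^ e.card - 1 := by
          rw [Set.ncard_coe_finset, Finset.card_erase_of_mem (Finset.empty_mem_powerset e),
            Finset.card_powerset]
  calc edgeDist S T ≤ 2 * (T.edgeSet \ S.edgeSet).ncard :=
        edgeDist_le_two_mul (hS.1.ncard_edgeSet_le (wg_mono (Finset.subset_insert e E)) hT.1.1)
    _ ≤ 2 * (2 ^ e.card - 1) := by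
        gcongr
        exact (Set.ncard_le_ncard hnew).trans ((Set.ncard_image_le (Set.toFinite _)).trans hdeg)

end Insertion

end Hypergraph

/-- **Insertion step of Theorem 3.2**: after inserting a hyperedge `e`, a
maximum-weight spanning forest satisfying Invariant (★) can be turned into one for
the new hypergraph, adding only edges incident to `e` and changing at most
`2 * (2 ^ |e| - 1)` edges. -/
theorem insertion_step (E : Finset (Finset V)) (e : Finset V) (he : e ∉ E)
    (S : SimpleGraph (Finset V)) (hS : IsMaxSpanningForest (wg E) S)
    (hstar : InvariantStar E S) :
    ∃ S', IsMaxSpanningForest (wg (insert e E)) S' ∧ InvariantStar (insert e E) S' ∧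
      (∀ p ∈ S'.edgeSet \ S.edgeSet, e ∈ p) ∧
      ((S.edgeSet \ S'.edgeSet) ∪ (S'.edgeSet \ S.edgeSet)).ncard ≤ 2 * (2 ^ e.card - 1) := by
  obtain ⟨T, hT, hmin⟩ :=
    exists_isNearestMaxForest_forall_le (wg (insert e E)) S (leafPotential S · e)
  exact ⟨T, hT.1, hT.invariantStar he hS hstar hmin,
    fun p hp => hT.mem_of_mem_edgeSet_sdiff hS hp, hT.edgeDist_le he hS⟩
end
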